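/- arXiv:1702.01281 — 5 statements merged into one kernel-verified Lean document; each statement's English description precedes it below -/
import Mathlib

section
/- Let β > 0, and let U and Ω be independent random variables on a probability space, with U uniformly distributed on [0,1] and Ω uniformly distributed on [-π,π]. Then the law of the random variable X = 2√(βU)·cos(Ω) is absolutely continuous with respect to Lebesgue measure on ℝ, with density x ↦ 𝟙[x ∈ [-2√β, 2√β]]·√(4β - x²)/(2πβ) (the Wigner semicircle density with parameter β). -/
/-!
The pair `(U, Ω)` is uniform on `[0,1] × [-π,π]`. The map
`(u, θ) ↦ (2√(βu) cos θ, 2√(βu) sin θ)` is polar coordinates with radius `2√(βu)`; it maps the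
open rectangle injectively onto the disc of radius `2√β` minus a null slit, with constant Jacobian
determinant `2β`. Hence it pushes the uniform law on the rectangle to the uniform law on the disc,
and `X` is the first coordinate of that point. The first marginal of the uniform law on the disc
has density proportional to the length `2√(4β - x²)` of the vertical chord through `x`.
-/

open MeasureTheory Real Set
open scoped ENNReal

theorem ContinuousLinearMap.det_comp {R M : Type*} [CommRing R] [TopologicalSpace M]
    [AddCommGroup M] [Module R M] (f g : M →L[R] M) : (f.comp g).det = f.det * g.det :=
  LinearMap.det_comp (f : M →ₗ[R] M) g

namespace MeasureTheory

theorem Measure.map_fst_restrict_prod {α β : Type*} [MeasurableSpace α] [MeasurableSpace β]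
    (μ : Measure α) (ν : Measure β) [SFinite ν] {D : Set (α × β)} (hD : MeasurableSet D) :
    ((μ.prod ν).restrict D).map Prod.fst = μ.withDensity fun x => ν (Prod.mk x ⁻¹' D) := by
  ext A hA
  rw [Measure.map_apply measurable_fst hA, Measure.restrict_apply (measurable_fst hA),
    Measure.prod_apply (measurable_fst hA |>.inter hD), withDensity_apply _ hA,
    ← lintegral_indicator hA]
  congr 1 with x
  by_cases hx : x ∈ A <;> simp [hx, Set.preimage]

theorem pdf.IsUniform.prodMk {Ω E F : Type*} [MeasurableSpace Ω] [MeasurableSpace E]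
    [MeasurableSpace F] {P : Measure Ω} [IsFiniteMeasure P] {μ : Measure E} {ν : Measure F}
    [SFinite μ] [SFinite ν] {X : Ω → E} {Y : Ω → F} {s : Set E} {t : Set F}
    (hμs : μ s ≠ 0) (hμs' : μ s ≠ ∞) (hνt : ν t ≠ 0) (hνt' : ν t ≠ ∞)
    (hX : pdf.IsUniform X s P μ) (hY : pdf.IsUniform Y t P ν)
    (hXY : ProbabilityTheory.IndepFun X Y P) :
    pdf.IsUniform (fun ω => (X ω, Y ω)) (s ×ˢ t) P (μ.prod ν) := by
  have hmap := (ProbabilityTheory.indepFun_iff_map_prod_eq_prod_map_map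
    (hX.aemeasurable hμs hμs') (hY.aemeasurable hνt hνt')).1 hXY
  unfold pdf.IsUniform at hX hY ⊢
  rw [hmap, hX, hY, ProbabilityTheory.cond, ProbabilityTheory.cond, ProbabilityTheory.cond,
    Measure.prod_smul_left, Measure.prod_smul_right, smul_smul, Measure.prod_restrict,
    Measure.prod_prod, ENNReal.mul_inv (.inl hμs) (.inl hμs')]

theorem pdf.IsUniform.map_prodMk_Icc {Ω : Type*} [MeasurableSpace Ω] {P : Measure Ω}
    [IsFiniteMeasure P] {X Y : Ω → ℝ} {a b c d : ℝ} (hab : a < b) (hcd : c < d)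
    (hX : pdf.IsUniform X (Icc a b) P) (hY : pdf.IsUniform Y (Icc c d) P)
    (hXY : ProbabilityTheory.IndepFun X Y P) :
    P.map (fun ω => (X ω, Y ω))
      = (ENNReal.ofReal ((b - a) * (d - c)))⁻¹ • volume.restrict (Ioo a b ×ˢ Ioo c d) := by
  have h := hX.prodMk (by simpa using hab) (by simp) (by simpa using hcd) (by simp) hY hXY
  unfold pdf.IsUniform at h
  rw [h, ProbabilityTheory.cond, Measure.restrict_congr_set
      (Measure.set_prod_ae_eq Ioo_ae_eq_Icc Ioo_ae_eq_Icc).symm, Measure.prod_prod,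
    Real.volume_Icc, Real.volume_Icc, ← ENNReal.ofReal_mul (sub_nonneg.2 hab.le),
    ← Measure.volume_eq_prod]

theorem map_restrict_eq_smul_restrict_image_of_abs_det_fderiv_eq {E : Type*}
    [NormedAddCommGroup E] [NormedSpace ℝ E] [FiniteDimensional ℝ E] [MeasurableSpace E]
    [BorelSpace E] (μ : Measure E) [μ.IsAddHaarMeasure] {s : Set E} {f : E → E}
    {f' : E → E →L[ℝ] E} {c : ℝ} (hs : MeasurableSet s)
    (hf' : ∀ x ∈ s, HasFDerivWithinAt f (f' x) s x) (hf : InjOn f s) (hc : 0 < c)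
    (hdet : ∀ x ∈ s, |(f' x).det| = c) :
    (μ.restrict s).map f = (ENNReal.ofReal c)⁻¹ • μ.restrict (f '' s) := by
  have hdensity : (μ.restrict s).withDensity (fun x => ENNReal.ofReal |(f' x).det|)
      = ENNReal.ofReal c • μ.restrict s := by
    rw [← withDensity_const]
    exact withDensity_congr_ae <| (ae_restrict_iff' hs).2 <| .of_forall fun x hx => by
      simp only [hdet x hx]
  rw [← map_withDensity_abs_det_fderiv_eq_addHaar μ hs.nullMeasurableSet hf' hf, hdensity,
    Measure.map_smul, smul_smul, ENNReal.inv_mul_cancel (by simpa using hc) ENNReal.ofReal_ne_top,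
    one_smul]

end MeasureTheory

theorem Real.volume_setOf_sq_add_sq_lt (a x : ℝ) :
    volume {y : ℝ | x ^ 2 + y ^ 2 < a} = ENNReal.ofReal (2 * √(a - x ^ 2)) := by
  have hchord : {y : ℝ | x ^ 2 + y ^ 2 < a} = Ioo (-√(a - x ^ 2)) √(a - x ^ 2) := by
    ext y
    rw [mem_ofPred_eq, mem_Ioo, ← abs_lt, Real.lt_sqrt (abs_nonneg y), sq_abs]
    constructor <;> intro h <;> linarith
  rw [hchord, Real.volume_Ioo]
  ring_nf

theorem map_fst_restrict_setOf_sq_add_sq_lt (a : ℝ) :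
    (volume.restrict {q : ℝ × ℝ | q.1 ^ 2 + q.2 ^ 2 < a}).map Prod.fst
      = volume.withDensity fun x => ENNReal.ofReal (2 * √(a - x ^ 2)) := by
  rw [Measure.volume_eq_prod,
    Measure.map_fst_restrict_prod _ _ (measurableSet_lt (by fun_prop) measurable_const)]
  simp only [preimage_ofPred_eq, Real.volume_setOf_sq_add_sq_lt]

/-- `Real.sqrt` vanishes on negative numbers, so the indicator is redundant. -/
theorem Real.indicator_Icc_sqrt_sub_sq_div (a c : ℝ) :
    (Icc (-√a) √a).indicator (fun y => √(a - y ^ 2) / c) = fun y => √(a - y ^ 2) / c := by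
  refine indicator_eq_self.2 fun y hy => by_contra fun hy' => hy ?_
  rw [mem_Icc, ← abs_le, not_le] at hy'
  have hay : a < y ^ 2 := sq_abs y ▸ (Real.sqrt_lt' ((Real.sqrt_nonneg a).trans_lt hy')).1 hy'
  simp only [Real.sqrt_eq_zero_of_nonpos (sub_nonpos.2 hay.le), zero_div]

theorem withDensity_semicircle {β : ℝ} (hβ : 0 < β) :
    volume.withDensity (fun x => ENNReal.ofReal ((Icc (-(2 * √β)) (2 * √β)).indicator
        (fun y => √(4 * β - y ^ 2) / (2 * π * β)) x))
      = (ENNReal.ofReal (2 * π))⁻¹ • (ENNReal.ofReal (2 * β))⁻¹ •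
          volume.withDensity fun x => ENNReal.ofReal (2 * √(4 * β - x ^ 2)) := by
  rw [← withDensity_smul' _ _ (by simp [hβ]), ← withDensity_smul' _ _ (by simp [pi_pos])]
  congr 1 with x
  have hsqrt : 2 * √β = √(4 * β) := by
    rw [Real.sqrt_mul zero_le_four, show (4 : ℝ) = 2 ^ 2 by norm_num, Real.sqrt_sq zero_le_two]
  rw [hsqrt, Real.indicator_Icc_sqrt_sub_sq_div, Pi.smul_apply, Pi.smul_apply, smul_eq_mul,
    smul_eq_mul, ← ENNReal.ofReal_inv_of_pos (by positivity),
    ← ENNReal.ofReal_inv_of_pos (by positivity), ← ENNReal.ofReal_mul (by positivity),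
    ← ENNReal.ofReal_mul (by positivity)]
  congr 1
  field_simp

noncomputable def equalAreaPolar (β : ℝ) (p : ℝ × ℝ) : ℝ × ℝ :=
  polarCoord.symm (2 * √(β * p.1), p.2)

noncomputable def fderivEqualAreaPolar (β : ℝ) (p : ℝ × ℝ) : ℝ × ℝ →L[ℝ] ℝ × ℝ :=
  (fderivPolarCoordSymm (2 * √(β * p.1), p.2)).comp
    ((ContinuousLinearMap.smulRight (1 : ℝ →L[ℝ] ℝ) (β / √(β * p.1))).prodMap
      (ContinuousLinearMap.id ℝ ℝ))

section equalAreaPolar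

variable {β : ℝ}

theorem continuous_equalAreaPolar : Continuous (equalAreaPolar β) :=
  continuous_polarCoord_symm.comp (by fun_prop)

theorem hasDerivAt_two_mul_sqrt_mul {u : ℝ} (hβu : β * u ≠ 0) :
    HasDerivAt (fun u => 2 * √(β * u)) (β / √(β * u)) u := by
  refine ((((hasDerivAt_id' u).const_mul β).sqrt hβu).const_mul 2).congr_deriv ?_
  ring

theorem hasFDerivAt_equalAreaPolar (hβ : 0 < β) {p : ℝ × ℝ} (hp : 0 < p.1) :
    HasFDerivAt (equalAreaPolar β) (fderivEqualAreaPolar β p) p :=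
  (hasFDerivAt_polarCoord_symm _).comp p
    ((hasDerivAt_two_mul_sqrt_mul (by positivity)).hasFDerivAt.prodMap p (hasFDerivAt_id p.2))

theorem det_fderivEqualAreaPolar (hβ : 0 < β) {p : ℝ × ℝ} (hp : 0 < p.1) :
    (fderivEqualAreaPolar β p).det = 2 * β := by
  rw [fderivEqualAreaPolar, ContinuousLinearMap.det_comp, det_fderivPolarCoordSymm,
    ContinuousLinearMap.det, ContinuousLinearMap.coe_prodMap, LinearMap.det_prodMap,
    ← ContinuousLinearMap.det, ← ContinuousLinearMap.det, ContinuousLinearMap.det_smulRight]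
  simp [field]

theorem equalAreaPolar_fst_sq_add_snd_sq (hβ : 0 ≤ β) {p : ℝ × ℝ} (hp : 0 ≤ p.1) :
    (equalAreaPolar β p).1 ^ 2 + (equalAreaPolar β p).2 ^ 2 = 4 * β * p.1 := by
  simp only [equalAreaPolar, polarCoord_symm_apply]
  linear_combination (4 * β * p.1) * sin_sq_add_cos_sq p.2 +
    4 * (cos p.2 ^ 2 + sin p.2 ^ 2) * Real.sq_sqrt (by positivity : 0 ≤ β * p.1)

theorem injOn_equalAreaPolar (hβ : 0 < β) :
    InjOn (equalAreaPolar β) (Ioo 0 1 ×ˢ Ioo (-π) π) := by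
  have hmaps : MapsTo (fun p : ℝ × ℝ => (2 * √(β * p.1), p.2)) (Ioo 0 1 ×ˢ Ioo (-π) π)
      polarCoord.target := fun p ⟨hu, hθ⟩ => ⟨by simpa using mul_pos hβ hu.1, hθ⟩
  refine polarCoord.symm.injOn.comp (fun p hp q hq hpq => ?_) hmaps
  simp only [Prod.mk.injEq, mul_eq_mul_left_iff, two_ne_zero, or_false] at hpq
  rw [Real.sqrt_inj (by nlinarith [hp.1.1]) (by nlinarith [hq.1.1]), mul_right_inj' hβ.ne'] at hpq
  exact Prod.ext hpq.1 hpq.2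

theorem equalAreaPolar_image (hβ : 0 < β) :
    equalAreaPolar β '' (Ioo 0 1 ×ˢ Ioo (-π) π)
      = {q : ℝ × ℝ | q.1 ^ 2 + q.2 ^ 2 < 4 * β} ∩ polarCoord.source := by
  ext q
  constructor
  · rintro ⟨p, ⟨hu, hθ⟩, rfl⟩
    refine ⟨?_, polarCoord.map_target ⟨by simpa using mul_pos hβ hu.1, hθ⟩⟩
    simp only [mem_ofPred_eq, equalAreaPolar_fst_sq_add_snd_sq hβ.le hu.1.le]
    nlinarith [hu.2]
  · rintro ⟨hdisc, hq⟩
    obtain ⟨hr, hθ⟩ := polarCoord.map_source hq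
    refine ⟨((q.1 ^ 2 + q.2 ^ 2) / (4 * β), (polarCoord q).2), ⟨⟨?_, ?_⟩, hθ⟩, ?_⟩
    · have : 0 < √(q.1 ^ 2 + q.2 ^ 2) := hr
      exact div_pos (Real.sqrt_pos.1 this) (by positivity)
    · exact (div_lt_one (by positivity)).2 hdisc
    · have hradius : 2 * √(β * ((q.1 ^ 2 + q.2 ^ 2) / (4 * β))) = (polarCoord q).1 := by
        rw [polarCoord_apply, show β * ((q.1 ^ 2 + q.2 ^ 2) / (4 * β)) = (q.1 ^ 2 + q.2 ^ 2) / 2 ^ 2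
          by field_simp; ring, Real.sqrt_div' _ (by norm_num), Real.sqrt_sq zero_le_two]
        ring
      rw [equalAreaPolar, hradius]
      exact polarCoord.left_inv hq

theorem map_equalAreaPolar_restrict (hβ : 0 < β) :
    (volume.restrict (Ioo 0 1 ×ˢ Ioo (-π) π)).map (equalAreaPolar β)
      = (ENNReal.ofReal (2 * β))⁻¹ • volume.restrict {q : ℝ × ℝ | q.1 ^ 2 + q.2 ^ 2 < 4 * β} := by
  rw [map_restrict_eq_smul_restrict_image_of_abs_det_fderiv_eq volume
    (measurableSet_Ioo.prod measurableSet_Ioo)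
    (fun p hp => (hasFDerivAt_equalAreaPolar hβ hp.1.1).hasFDerivWithinAt)
    (injOn_equalAreaPolar hβ) (c := 2 * β) (by positivity)
    (fun p hp => by rw [det_fderivEqualAreaPolar hβ hp.1.1, abs_of_pos (by positivity)]),
    equalAreaPolar_image hβ, Measure.restrict_congr_set
      ((ae_eq_refl _).inter polarCoord_source_ae_eq_univ), inter_univ]

end equalAreaPolar

theorem wigner_semicircle_of_uniform_general
    {Ωs : Type*} [MeasurableSpace Ωs] {ℙ : Measure Ωs} [IsProbabilityMeasure ℙ]
    (β : ℝ) (hβ : 0 < β) (U W : Ωs → ℝ)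
    (hU : pdf.IsUniform U (Set.Icc (0 : ℝ) 1) ℙ)
    (hW : pdf.IsUniform W (Set.Icc (-π) π) ℙ)
    (hindep : ProbabilityTheory.IndepFun U W ℙ) :
    Measure.map (fun ω => 2 * Real.sqrt (β * U ω) * Real.cos (W ω)) ℙ
      = volume.withDensity (fun x => ENNReal.ofReal
          ((Set.Icc (-(2 * Real.sqrt β)) (2 * Real.sqrt β)).indicator
            (fun y => Real.sqrt (4 * β - y ^ 2) / (2 * π * β)) x)) := by
  have hpair := hU.map_prodMk_Icc zero_lt_one (neg_lt_self pi_pos) hW hindep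
  rw [show ((1 : ℝ) - 0) * (π - -π) = 2 * π by ring] at hpair
  have hUW : AEMeasurable (fun ω => (U ω, W ω)) ℙ :=
    (hU.aemeasurable (by simp) (by simp)).prodMk (hW.aemeasurable (by simp [pi_pos]) (by simp))
  have hX : (fun ω => 2 * √(β * U ω) * cos (W ω))
      = (Prod.fst ∘ equalAreaPolar β) ∘ fun ω => (U ω, W ω) := rfl
  rw [hX, ← AEMeasurable.map_map_of_aemeasurable
      (measurable_fst.comp continuous_equalAreaPolar.measurable).aemeasurable hUW,
    hpair, Measure.map_smul, ← Measure.map_map measurable_fst continuous_equalAreaPolar.measurable,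
    map_equalAreaPolar_restrict hβ, Measure.map_smul, map_fst_restrict_setOf_sq_add_sq_lt,
    withDensity_semicircle hβ]

/-- The law of `X = 2√(βU)·cos(Ω)`, with `U ~ Unif[0,1]` and `Ω ~ Unif[-π,π]` independent,
has the Wigner semicircle density with parameter `β`. -/
theorem wigner_semicircle_of_uniform
    {Ωs : Type*} [MeasurableSpace Ωs] {ℙ : Measure Ωs} [IsProbabilityMeasure ℙ]
    (β : ℝ) (hβ : 0 < β) (U W : Ωs → ℝ)
    (hUmeas : Measurable U) (hWmeas : Measurable W)
    (hU : pdf.IsUniform U (Set.Icc (0 : ℝ) 1) ℙ)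
    (hW : pdf.IsUniform W (Set.Icc (-π) π) ℙ)
    (hindep : ProbabilityTheory.IndepFun U W ℙ) :
    Measure.map (fun ω => 2 * Real.sqrt (β * U ω) * Real.cos (W ω)) ℙ
      = volume.withDensity (fun x => ENNReal.ofReal
          ((Set.Icc (-(2 * Real.sqrt β)) (2 * Real.sqrt β)).indicator
            (fun y => Real.sqrt (4 * β - y ^ 2) / (2 * π * β)) x)) :=
  wigner_semicircle_of_uniform_general β hβ U W hU hW hindep
end

section
/- Let c₁ ∈ ℝ and c₂ > 0. The pushforward of the uniform probability measure on [-π,π] under the map ω ↦ c₁ + 2c₂·cos(ω) is absolutely continuous with respect to Lebesgue measure on ℝ, with density x ↦ 𝟙[x ∈ (c₁ - 2c₂, c₁ + 2c₂)]·1/(π√(4c₂² - (x - c₁)²)). -/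
/-!
Since `cos` is even, the uniform law on `[-π, π]` has the same image as the uniform law on
`(0, π)`. On `(0, π)` the map `ω ↦ c₁ + 2c₂ cos ω` is injective onto `(c₁ - 2c₂, c₁ + 2c₂)`,
with `|derivative| = 2c₂ sin ω = √(4c₂² - (x - c₁)²)` at `x = c₁ + 2c₂ cos ω`, so the
one-dimensional change of variables formula gives the density `1 / (π √(4c₂² - (x - c₁)²))`.
-/

open MeasureTheory Real

section

open Set

theorem map_restrict_Icc_eq_two_smul_map_restrict_Ioo_of_even {β : Type*} [MeasurableSpace β]
    (μ : Measure ℝ) [μ.IsNegInvariant] [NullSingletonClass μ] {f : ℝ → β} (hf : Measurable f)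
    (heven : Function.Even f) {a : ℝ} (ha : 0 ≤ a) :
    (μ.restrict (Icc (-a) a)).map f = (2 : ENNReal) • (μ.restrict (Ioo 0 a)).map f := by
  have hsplit : μ.restrict (Icc (-a) a) = μ.restrict (Icc (-a) 0) + μ.restrict (Ioc 0 a) := by
    rw [← Measure.restrict_union (Iic_disjoint_Ioc le_rfl |>.mono_left Icc_subset_Iic_self)
      measurableSet_Ioc, Icc_union_Ioc_eq_Icc (neg_nonpos.2 ha) ha]
  have hreflect : (μ.restrict (Icc (-a) 0)).map f = (μ.restrict (Icc 0 a)).map f := by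
    have hneg := (Measure.measurePreserving_neg μ).restrict_preimage
      (measurableSet_Icc (a := 0) (b := a))
    rw [← hneg.map_eq, Measure.map_map hf measurable_neg, show f ∘ Neg.neg = f from funext heven]
    simp
  rw [hsplit, Measure.map_add _ _ hf, hreflect, Measure.restrict_congr_set Ioo_ae_eq_Icc.symm,
    Measure.restrict_congr_set Ioo_ae_eq_Ioc.symm, two_smul]

theorem map_smul_restrict_eq_withDensity_of_hasDerivWithinAt {s : Set ℝ} {f f' : ℝ → ℝ}
    (hs : MeasurableSet s) (hf : Measurable f) (hf' : ∀ x ∈ s, HasDerivWithinAt f (f' x) s x)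
    (hinj : InjOn f s) {g : ℝ → ENNReal} {c : ENNReal}
    (hg : ∀ x ∈ s, ENNReal.ofReal |f' x| * g (f x) = c) :
    (c • volume.restrict s).map f = volume.withDensity ((f '' s).indicator g) := by
  ext A hA
  have hfs : MeasurableSet (f '' s) :=
    hs.image_of_continuousOn_injOn (fun x hx => (hf' x hx).continuousWithinAt) hinj
  have hpointwise : ∀ x ∈ s,
      ENNReal.ofReal |f' x| * A.indicator g (f x) = (f ⁻¹' A).indicator (fun _ => c) x := by
    intro x hx
    by_cases hxA : f x ∈ A
    · simp [hxA, hg x hx]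
    · simp [hxA]
  calc (c • volume.restrict s).map f A = ∫⁻ x in s, (f ⁻¹' A).indicator (fun _ => c) x := by
        rw [Measure.map_apply hf hA, lintegral_indicator (hf hA), setLIntegral_const,
          Measure.smul_apply, Measure.restrict_apply (hf hA), smul_eq_mul, mul_comm]
    _ = ∫⁻ x in s, ENNReal.ofReal |f' x| * A.indicator g (f x) :=
        (setLIntegral_congr_fun hs hpointwise).symm
    _ = ∫⁻ y in f '' s, A.indicator g y :=
        (lintegral_image_eq_lintegral_abs_deriv_mul hs hf' hinj _).symm
    _ = volume.withDensity ((f '' s).indicator g) A := by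
        rw [withDensity_apply _ hA, lintegral_indicator hA, lintegral_indicator hfs,
          Measure.restrict_restrict hA, Measure.restrict_restrict hfs, inter_comm]

theorem image_affine_cos_Ioo_zero_pi (c₁ : ℝ) {c₂ : ℝ} (hc₂ : 0 < c₂) :
    (fun ω => c₁ + 2 * c₂ * cos ω) '' Ioo 0 π = Ioo (c₁ - 2 * c₂) (c₁ + 2 * c₂) := by
  have hcos : cos '' Ioo 0 π = Ioo (-1) 1 := cosPartialHomeomorph.image_source_eq_target
  have haffine := image_affine_Ioo (by positivity : 0 < 2 * c₂) c₁ (-1) 1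
  rw [← hcos, image_image] at haffine
  convert haffine using 1
  · simp only [add_comm]
  · congr 1 <;> ring

theorem injOn_affine_cos_Ioo_zero_pi (c₁ : ℝ) {c₂ : ℝ} (hc₂ : c₂ ≠ 0) :
    InjOn (fun ω => c₁ + 2 * c₂ * cos ω) (Ioo 0 π) := by
  intro a ha b hb hab
  refine injOn_cos (Ioo_subset_Icc_self ha) (Ioo_subset_Icc_self hb) ?_
  simpa [hc₂] using hab

theorem sqrt_four_mul_sq_sub_sq_mul_cos {c : ℝ} (hc : 0 ≤ c) {ω : ℝ} (hω : 0 ≤ sin ω) :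
    √(4 * c ^ 2 - (2 * c * cos ω) ^ 2) = 2 * c * sin ω := by
  rw [← sqrt_sq (by positivity : 0 ≤ 2 * c * sin ω)]
  congr 1
  nlinarith [sin_sq_add_cos_sq ω]

theorem map_affine_cos_smul_restrict_Ioo_zero_pi (c₁ : ℝ) {c₂ : ℝ} (hc₂ : 0 < c₂) :
    (ENNReal.ofReal (1 / π) • volume.restrict (Ioo 0 π)).map (fun ω => c₁ + 2 * c₂ * cos ω)
      = volume.withDensity (fun x => ENNReal.ofReal ((Ioo (c₁ - 2 * c₂) (c₁ + 2 * c₂)).indicator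
          (fun y => 1 / (π * √(4 * c₂ ^ 2 - (y - c₁) ^ 2))) x)) := by
  set density : ℝ → ℝ := fun y => 1 / (π * √(4 * c₂ ^ 2 - (y - c₁) ^ 2))
  have hderiv (ω : ℝ) : HasDerivAt (fun ω => c₁ + 2 * c₂ * cos ω) (2 * c₂ * -sin ω) ω :=
    ((hasDerivAt_cos ω).const_mul _).const_add _
  have hjacobian : ∀ ω ∈ Ioo 0 π, ENNReal.ofReal |2 * c₂ * -sin ω|
      * ENNReal.ofReal (density (c₁ + 2 * c₂ * cos ω)) = ENNReal.ofReal (1 / π) := by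
    intro ω hω
    have hsin : 0 < sin ω := sin_pos_of_pos_of_lt_pi hω.1 hω.2
    rw [← ENNReal.ofReal_mul (abs_nonneg _)]
    congr 1
    simp only [density, add_sub_cancel_left, sqrt_four_mul_sq_sub_sq_mul_cos hc₂.le hsin.le,
      abs_mul, abs_neg, abs_of_pos hsin, abs_of_pos (by positivity : 0 < 2 * c₂)]
    field_simp
  rw [map_smul_restrict_eq_withDensity_of_hasDerivWithinAt
    (g := fun y => ENNReal.ofReal (density y)) measurableSet_Ioo (by fun_prop)
    (fun ω _ => (hderiv ω).hasDerivWithinAt) (injOn_affine_cos_Ioo_zero_pi c₁ hc₂.ne') hjacobian,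
    image_affine_cos_Ioo_zero_pi c₁ hc₂]
  exact congrArg _ (indicator_comp_of_zero ENNReal.ofReal_zero)

end

/-- The pushforward of the uniform probability measure on `[-π, π]` under
`ω ↦ c₁ + 2c₂·cos ω` is the arcsine-type distribution on `(c₁ - 2c₂, c₁ + 2c₂)`. -/
theorem shifted_arcsine_law_of_cos (c₁ c₂ : ℝ) (hc₂ : 0 < c₂) :
    Measure.map (fun ω : ℝ => c₁ + 2 * c₂ * Real.cos ω)
        ((volume (Set.Icc (-π) π))⁻¹ • volume.restrict (Set.Icc (-π) π))
      = volume.withDensity (fun x => ENNReal.ofReal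
          ((Set.Ioo (c₁ - 2 * c₂) (c₁ + 2 * c₂)).indicator
            (fun y => 1 / (π * Real.sqrt (4 * c₂ ^ 2 - (y - c₁) ^ 2))) x)) := by
  have hnormalization : (volume (Set.Icc (-π) π))⁻¹ * 2 = ENNReal.ofReal (1 / π) := by
    rw [volume_Icc, show π - -π = 2 * π by ring, ENNReal.ofReal_mul zero_le_two,
      ENNReal.ofReal_ofNat, ENNReal.mul_inv (by simp) (by simp), mul_right_comm,
      ENNReal.inv_mul_cancel two_ne_zero ENNReal.ofNat_ne_top, one_mul, one_div,
      ENNReal.ofReal_inv_of_pos pi_pos]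
  rw [Measure.map_smul,
    map_restrict_Icc_eq_two_smul_map_restrict_Ioo_of_even volume (by fun_prop)
      (fun ω => by simp) pi_pos.le,
    smul_smul, hnormalization, ← Measure.map_smul, map_affine_cos_smul_restrict_Ioo_zero_pi c₁ hc₂]
end

section
/- Let (X_n)_{n≥1} be a sequence of independent real random variables, where X_n has the Gamma distribution with shape parameter a_n > 0 and rate 1, and suppose a_n/n → c for some c > 0 as n → ∞. Then X_n/n → c almost surely as n → ∞. -/
/-!
The moment generating function of `Gamma(a, 1)` is `(1 - t)^(-a)` for `t < 1`, so Chernoff's bound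
with the optimal tilt gives `P(X_n ≥ (c + ε) n) ≤ exp(-r n)` and `P(X_n ≤ (c - ε) n) ≤ exp(-r' n)`
with rates `r, r' > 0` once `a_n / n` is within `ε / 2` of `c`. These probabilities are summable,
so by Borel–Cantelli almost surely `|X_n / n - c| < ε` eventually, for every `ε` in a sequence
tending to `0`.
-/

open MeasureTheory ProbabilityTheory Filter

open Real Set
open scoped ENNReal Topology

lemma ae_tendsto_of_forall_ae_eventually_dist_lt {α ι E : Type*} [MeasurableSpace α]
    [PseudoMetricSpace E] {μ : Measure α} {l : Filter ι} {f : ι → α → E} {c : E}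
    (h : ∀ ε > 0, ∀ᵐ x ∂μ, ∀ᶠ n in l, dist (f n x) c < ε) :
    ∀ᵐ x ∂μ, Tendsto (fun n => f n x) l (𝓝 c) := by
  filter_upwards [ae_all_iff.2 fun k : ℕ => h (1 / (k + 1)) Nat.one_div_pos_of_nat] with x hx
  refine Metric.tendsto_nhds.2 fun ε hε => ?_
  obtain ⟨k, hk⟩ := exists_nat_one_div_lt hε
  exact (hx k).mono fun n hn => hn.trans hk

lemma ae_eventually_notMem_of_eventually_le_exp {α : Type*} [MeasurableSpace α]
    {μ : Measure α} {s : ℕ → Set α} {r : ℝ} (hr : 0 < r)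
    (h : ∀ᶠ n in atTop, μ (s n) ≤ ENNReal.ofReal (exp (-(r * n)))) :
    ∀ᵐ x ∂μ, ∀ᶠ n in atTop, x ∉ s n := by
  obtain ⟨N, hN⟩ := eventually_atTop.1 h
  have hgeom : ∀ m : ℕ, μ (s (m + N)) ≤ ENNReal.ofReal (exp (-r)) ^ m := fun m => by
    refine (hN _ (Nat.le_add_left N m)).trans ?_
    rw [← ENNReal.ofReal_pow (exp_pos _).le, ← exp_nat_mul]
    gcongr
    push_cast
    nlinarith
  have hratio : ENNReal.ofReal (exp (-r)) < 1 :=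
    ENNReal.ofReal_lt_one.2 (exp_lt_one_iff.2 (neg_neg_of_pos hr))
  have hsum : ∑' m, μ (s (m + N)) ≠ ∞ :=
    ((ENNReal.tsum_le_tsum hgeom).trans_lt (tsum_geometric_lt_top.2 hratio)).ne
  filter_upwards [ae_eventually_notMem hsum] with x hx
  rwa [← map_add_atTop_eq_nat N, eventually_map]

lemma measure_le_exp_mul_lintegral_exp (μ : Measure ℝ) {s : Set ℝ} {t u : ℝ}
    (hs : ∀ x ∈ s, t * u ≤ t * x) :
    μ s ≤ ENNReal.ofReal (exp (-(t * u))) * ∫⁻ x, ENNReal.ofReal (exp (t * x)) ∂μ := by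
  calc μ s ≤ μ {x | ENNReal.ofReal (exp (t * u)) ≤ ENNReal.ofReal (exp (t * x))} :=
        measure_mono fun x hx => ENNReal.ofReal_le_ofReal (exp_le_exp.2 (hs x hx))
    _ ≤ (∫⁻ x, ENNReal.ofReal (exp (t * x)) ∂μ) / ENNReal.ofReal (exp (t * u)) :=
        meas_ge_le_lintegral_div (by fun_prop) (by simp [exp_pos]) ENNReal.ofReal_ne_top
    _ = _ := by
        rw [ENNReal.div_eq_inv_mul, ← ENNReal.ofReal_inv_of_pos (exp_pos _), exp_neg]

lemma ofReal_exp_mul_gammaPDF {a t : ℝ} (ht : t < 1) (x : ℝ) :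
    gammaPDF a 1 x * ENNReal.ofReal (exp (t * x)) =
      ENNReal.ofReal ((1 - t) ^ (-a)) * gammaPDF a (1 - t) x := by
  rcases lt_or_ge x 0 with hx | hx
  · simp [gammaPDF_of_neg hx]
  have h1t : 0 < 1 - t := by linarith
  rw [gammaPDF_of_nonneg hx, gammaPDF_of_nonneg hx, ← ENNReal.ofReal_mul' (exp_pos _).le,
    ← ENNReal.ofReal_mul (by positivity)]
  congr 1
  have hexp : exp (-(1 * x)) * exp (t * x) = exp (-((1 - t) * x)) := by rw [← exp_add]; ring_nf
  rw [one_rpow, rpow_neg h1t.le, mul_assoc _ _ (exp (t * x)), hexp]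
  field_simp [(rpow_pos_of_pos h1t a).ne']

lemma lintegral_exp_mul_gammaMeasure {a t : ℝ} (ha : 0 < a) (ht : t < 1) :
    ∫⁻ x, ENNReal.ofReal (exp (t * x)) ∂gammaMeasure a 1 = ENNReal.ofReal ((1 - t) ^ (-a)) := by
  have hpdf (r : ℝ) : Measurable (gammaPDF a r) := (measurable_gammaPDFReal a r).ennreal_ofReal
  rw [gammaMeasure, lintegral_withDensity_eq_lintegral_mul _ (hpdf 1) (by fun_prop)]
  simp only [Pi.mul_apply, ofReal_exp_mul_gammaPDF ht]
  rw [lintegral_const_mul _ (hpdf _), lintegral_gammaPDF_eq_one ha (by linarith), mul_one]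

/-- Cramér rate of `Gamma(b x, 1)` at level `d x`: its mass beyond `d x`, on the side away from the
mean `b x`, is at most `exp (-(gammaRate b d * x))`. -/
noncomputable def gammaRate (b d : ℝ) : ℝ := d - b - b * log (d / b)

lemma gammaRate_pos {b d : ℝ} (hb : 0 < b) (hd : 0 < d) (hbd : b ≠ d) : 0 < gammaRate b d := by
  have hlog := log_lt_sub_one_of_pos (div_pos hd hb)
    (by rwa [ne_eq, div_eq_one_iff_eq hb.ne', eq_comm])
  have hrate : gammaRate b d = b * (d / b - 1 - log (d / b)) := by
    rw [gammaRate]; field_simp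
  rw [hrate]
  exact mul_pos hb (by linarith)

-- Chernoff bound with the tilt `1 - b / d`, which moves the mean `b x` of `Gamma(b x, 1)` to `d x`.
lemma gammaMeasure_le_exp_gammaRate {a b d x : ℝ} {s : Set ℝ} (ha : 0 < a) (hb : 0 < b)
    (hd : 0 < d) (hs : ∀ y ∈ s, (1 - b / d) * (d * x) ≤ (1 - b / d) * y)
    (hab : (a - b * x) * log (d / b) ≤ 0) :
    gammaMeasure a 1 s ≤ ENNReal.ofReal (exp (-(gammaRate b d * x))) := by
  refine (measure_le_exp_mul_lintegral_exp _ hs).trans ?_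
  rw [lintegral_exp_mul_gammaMeasure ha (by linarith [div_pos hb hd]), sub_sub_cancel,
    ← ENNReal.ofReal_mul (exp_pos _).le, rpow_def_of_pos (div_pos hb hd), ← exp_add]
  refine ENNReal.ofReal_le_ofReal (exp_le_exp.2 ?_)
  have htilt : (1 - b / d) * (d * x) = (d - b) * x := by field_simp
  have hlog : log (b / d) = -log (d / b) := by rw [← log_inv, inv_div]
  rw [htilt, hlog, gammaRate]
  linear_combination hab

lemma gammaMeasure_Ici_le_exp_gammaRate {a b d x : ℝ} (ha : 0 < a) (hb : 0 < b) (hbd : b < d)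
    (hax : a ≤ b * x) :
    gammaMeasure a 1 (Ici (d * x)) ≤ ENNReal.ofReal (exp (-(gammaRate b d * x))) := by
  have hd : 0 < d := hb.trans hbd
  refine gammaMeasure_le_exp_gammaRate ha hb hd (fun y hy => ?_) ?_
  · exact mul_le_mul_of_nonneg_left hy (sub_nonneg.2 ((div_le_one hd).2 hbd.le))
  · exact mul_nonpos_of_nonpos_of_nonneg (by linarith) (log_nonneg ((one_le_div hb).2 hbd.le))

lemma gammaMeasure_Iic_le_exp_gammaRate {a b d x : ℝ} (ha : 0 < a) (hd : 0 < d) (hdb : d < b)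
    (hax : b * x ≤ a) :
    gammaMeasure a 1 (Iic (d * x)) ≤ ENNReal.ofReal (exp (-(gammaRate b d * x))) := by
  have hb : 0 < b := hd.trans hdb
  refine gammaMeasure_le_exp_gammaRate ha hb hd (fun y hy => ?_) ?_
  · exact mul_le_mul_of_nonpos_left hy (sub_nonpos.2 ((one_le_div hd).2 hdb.le))
  · exact mul_nonpos_of_nonneg_of_nonpos (by linarith)
      (log_nonpos (div_pos hd hb).le ((div_le_one hb).2 hdb.le))

lemma ae_eventually_dist_div_lt {Ω : Type*} [MeasurableSpace Ω] {P : Measure Ω} {a : ℕ → ℝ}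
    (ha : ∀ n, 0 < a n) {c : ℝ} (halim : Tendsto (fun n : ℕ => a n / n) atTop (𝓝 c))
    {X : ℕ → Ω → ℝ} (hXmeas : ∀ n, Measurable (X n))
    (hlaw : ∀ n, Measure.map (X n) P = gammaMeasure (a n) 1) {ε : ℝ} (hε : 0 < ε) (hεc : ε < c) :
    ∀ᵐ ω ∂P, ∀ᶠ n in atTop, dist (X n ω / n) c < ε := by
  have hlaw_apply (n : ℕ) {s : Set ℝ} (hs : MeasurableSet s) :
      P (X n ⁻¹' s) = gammaMeasure (a n) 1 s := by
    rw [← Measure.map_apply (hXmeas n) hs, hlaw]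
  have ha_near : ∀ᶠ n : ℕ in atTop, (c - ε / 2) * n ≤ a n ∧ a n ≤ (c + ε / 2) * n := by
    filter_upwards [halim.eventually (Ioo_mem_nhds (by linarith : c - ε / 2 < c)
      (by linarith : c < c + ε / 2)), eventually_gt_atTop 0] with n ⟨hlo, hhi⟩ hn
    have hn' : (0 : ℝ) < n := Nat.cast_pos.2 hn
    exact ⟨((lt_div_iff₀ hn').1 hlo).le, ((div_lt_iff₀ hn').1 hhi).le⟩
  have hupper : ∀ᵐ ω ∂P, ∀ᶠ n in atTop, ω ∉ X n ⁻¹' Ici ((c + ε) * n) := by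
    have hrate : 0 < gammaRate (c + ε / 2) (c + ε) :=
      gammaRate_pos (by linarith) (by linarith) (by linarith)
    refine ae_eventually_notMem_of_eventually_le_exp hrate ?_
    filter_upwards [ha_near] with n hn
    rw [hlaw_apply n measurableSet_Ici]
    exact gammaMeasure_Ici_le_exp_gammaRate (ha n) (by linarith) (by linarith) hn.2
  have hlower : ∀ᵐ ω ∂P, ∀ᶠ n in atTop, ω ∉ X n ⁻¹' Iic ((c - ε) * n) := by
    have hrate : 0 < gammaRate (c - ε / 2) (c - ε) :=
      gammaRate_pos (by linarith) (by linarith) (by linarith)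
    refine ae_eventually_notMem_of_eventually_le_exp hrate ?_
    filter_upwards [ha_near] with n hn
    rw [hlaw_apply n measurableSet_Iic]
    exact gammaMeasure_Iic_le_exp_gammaRate (ha n) (by linarith) (by linarith) hn.1
  filter_upwards [hupper, hlower] with ω hup hlo
  filter_upwards [hup, hlo, eventually_gt_atTop 0] with n hup hlo hn
  have hn' : (0 : ℝ) < n := Nat.cast_pos.2 hn
  simp only [mem_preimage, mem_Ici, mem_Iic, not_le] at hup hlo
  rw [dist_eq, abs_sub_lt_iff, sub_lt_iff_lt_add', sub_lt_comm, div_lt_iff₀ hn', lt_div_iff₀ hn']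
  exact ⟨hup, hlo⟩

theorem gamma_div_n_tendsto_ae_general
    {Ω : Type*} [MeasurableSpace Ω] (P : Measure Ω)
    (a : ℕ → ℝ) (ha : ∀ n, 0 < a n) (c : ℝ) (hc : 0 < c)
    (halim : Tendsto (fun n : ℕ => a n / n) atTop (nhds c))
    (X : ℕ → Ω → ℝ) (hXmeas : ∀ n, Measurable (X n))
    (hlaw : ∀ n, Measure.map (X n) P = gammaMeasure (a n) 1) :
    ∀ᵐ ω ∂P, Tendsto (fun n : ℕ => X n ω / n) atTop (nhds c) := by
  refine ae_tendsto_of_forall_ae_eventually_dist_lt fun ε hε => ?_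
  filter_upwards [ae_eventually_dist_div_lt ha halim hXmeas hlaw (lt_min hε (half_pos hc))
    ((min_le_right _ _).trans_lt (half_lt_self hc))] with ω hω
  exact hω.mono fun n hn => hn.trans_le (min_le_left _ _)

/-- If `(X n)` are independent with `X n ~ Gamma(aₙ, 1)` and `aₙ/n → c > 0`,
then `X n / n → c` almost surely. -/
theorem gamma_div_n_tendsto_ae
    {Ω : Type*} [MeasurableSpace Ω] (P : Measure Ω) [IsProbabilityMeasure P]
    (a : ℕ → ℝ) (ha : ∀ n, 0 < a n) (c : ℝ) (hc : 0 < c)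
    (halim : Tendsto (fun n : ℕ => a n / n) atTop (nhds c))
    (X : ℕ → Ω → ℝ) (hXmeas : ∀ n, Measurable (X n))
    (hindep : iIndepFun X P)
    (hlaw : ∀ n, Measure.map (X n) P = gammaMeasure (a n) 1) :
    ∀ᵐ ω ∂P, Tendsto (fun n : ℕ => X n ω / n) atTop (nhds c) :=
  gamma_div_n_tendsto_ae_general P a ha c hc halim X hXmeas hlaw
end

section
/- Let c₁ ∈ ℝ and c₂ > 0, and let A be the bounded self-adjoint operator on ℓ²(ℤ; ℂ) defined by (Af)(v) = c₁·f(v) + c₂·(f(v-1) + f(v+1)). Let δ₀ ∈ ℓ²(ℤ; ℂ) be the indicator of the vertex 0. Then for every continuous function f : ℝ → ℂ, ⟨δ₀, f(A)δ₀⟩ = (1/(2π))·∫_{-π}^{π} f(c₁ + 2c₂·cos(ω)) dω, where f(A) is defined by the continuous functional calculus for the self-adjoint operator A. -/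
/-!
Under the Fourier series `ℓ²(ℤ) ≅ L²(-π, π)` the operator `A` becomes multiplication by its symbol
`c₁ + 2c₂ cos ω`, because `2 cos ω · e^{ivω} = e^{i(v-1)ω} + e^{i(v+1)ω}`, and `δ₀` becomes the
constant `1`. Hence `Aⁿδ₀` has coordinates `(1/2π) ∫ (c₁ + 2c₂ cos ω)ⁿ e^{ivω} dω`, and reading off
the coordinate `0` proves the identity for polynomial `f`. Both sides change by at most `ε` when `f`
changes by at most `ε` on an interval containing the spectrum of `A` and the range of the symbol,
so Weierstrass approximation extends the identity to all continuous `f`.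
-/

open Real Polynomial Set

lemma integral_exp_I_mul_int_mul (v : ℤ) :
    ∫ ω in (-π)..π, Complex.exp (Complex.I * v * ω) = if v = 0 then 2 * (π : ℂ) else 0 := by
  rcases eq_or_ne v 0 with rfl | hv
  · simp [two_mul]
  have hIv : Complex.I * v ≠ 0 := mul_ne_zero Complex.I_ne_zero (by exact_mod_cast hv)
  have hperiodic : Complex.exp (Complex.I * v * π) = Complex.exp (Complex.I * v * (-π : ℝ)) := by
    rw [show Complex.I * v * π = Complex.I * v * (-π : ℝ) + v * (2 * π * Complex.I) by
      push_cast; ring, Complex.exp_add, Complex.exp_int_mul_two_pi_mul_I, mul_one]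
  rw [if_neg hv, integral_exp_mul_complex hIv, hperiodic, sub_self, zero_div]

lemma two_cos_mul_exp_I_mul_int_mul (v : ℤ) (ω : ℝ) :
    2 * Complex.cos ω * Complex.exp (Complex.I * v * ω)
      = Complex.exp (Complex.I * (v - 1 : ℤ) * ω) + Complex.exp (Complex.I * (v + 1 : ℤ) * ω) := by
  rw [Complex.two_cos, add_mul, ← Complex.exp_add, ← Complex.exp_add, add_comm]
  push_cast
  ring_nf

theorem exists_complex_polynomial_near_of_continuousOn (a b : ℝ) {f : ℝ → ℂ}
    (hf : ContinuousOn f (Icc a b)) {ε : ℝ} (hε : 0 < ε) :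
    ∃ P : ℂ[X], ∀ x ∈ Icc a b, ‖P.eval (x : ℂ) - f x‖ < ε := by
  obtain ⟨p, hp⟩ := exists_polynomial_near_of_continuousOn a b (fun x => (f x).re)
    (Complex.continuous_re.comp_continuousOn hf) (ε / 2) (half_pos hε)
  obtain ⟨q, hq⟩ := exists_polynomial_near_of_continuousOn a b (fun x => (f x).im)
    (Complex.continuous_im.comp_continuousOn hf) (ε / 2) (half_pos hε)
  refine ⟨p.map Complex.ofRealHom + C Complex.I * q.map Complex.ofRealHom, fun x hx => ?_⟩
  have hsplit : (p.map Complex.ofRealHom + C Complex.I * q.map Complex.ofRealHom).eval (x : ℂ) - f x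
      = ((p.eval x - (f x).re : ℝ) : ℂ) + Complex.I * ((q.eval x - (f x).im : ℝ) : ℂ) := by
    rw [eval_add, eval_mul, eval_C, eval_map, eval_map, ← Complex.ofRealHom_eq_coe, eval₂_at_apply,
      eval₂_at_apply, Complex.ofRealHom_eq_coe, Complex.ofRealHom_eq_coe]
    conv_lhs => rw [← Complex.re_add_im (f x)]
    push_cast
    ring
  calc _ ≤ |p.eval x - (f x).re| + |q.eval x - (f x).im| := by
        rw [hsplit]
        refine (norm_add_le _ _).trans_eq ?_
        rw [norm_mul, Complex.norm_I, one_mul, Complex.norm_real, Complex.norm_real,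
          Real.norm_eq_abs, Real.norm_eq_abs]
    _ < ε / 2 + ε / 2 := add_lt_add (hp x hx) (hq x hx)
    _ = ε := add_halves ε

/-- Only continuous `g, h` are compared, since `cfc` of a discontinuous function is junk. -/
def SupNormLipschitzOn (s : Set ℝ) (Φ : (ℝ → ℂ) → ℂ) : Prop :=
  ∀ g h : ℝ → ℂ, Continuous g → Continuous h →
    ∀ ε : ℝ, (∀ x ∈ s, ‖g x - h x‖ ≤ ε) → ‖Φ g - Φ h‖ ≤ ε

namespace SupNormLipschitzOn

variable {a b : ℝ} {Φ Ψ : (ℝ → ℂ) → ℂ}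

theorem eq_of_eq_on_polynomials (hΦ : SupNormLipschitzOn (Icc a b) Φ)
    (hΨ : SupNormLipschitzOn (Icc a b) Ψ)
    (hpoly : ∀ P : ℂ[X], Φ (fun x => P.eval (x : ℂ)) = Ψ (fun x => P.eval (x : ℂ)))
    {f : ℝ → ℂ} (hf : Continuous f) : Φ f = Ψ f := by
  refine eq_of_forall_dist_le fun ε hε => ?_
  obtain ⟨P, hP⟩ :=
    exists_complex_polynomial_near_of_continuousOn a b hf.continuousOn (half_pos hε)
  have hPc : Continuous fun x : ℝ => P.eval (x : ℂ) := P.continuous.comp Complex.continuous_ofReal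
  have hnear : ∀ x ∈ Icc a b, ‖f x - P.eval (x : ℂ)‖ ≤ ε / 2 := fun x hx =>
    (norm_sub_rev _ _).trans_le (hP x hx).le
  calc dist (Φ f) (Ψ f)
      = ‖(Φ f - Φ fun x => P.eval (x : ℂ)) + (Ψ (fun x => P.eval (x : ℂ)) - Ψ f)‖ := by
        rw [dist_eq_norm, hpoly]; abel_nf
    _ ≤ ε / 2 + ε / 2 := (norm_add_le _ _).trans <| add_le_add (hΦ _ _ hf hPc _ hnear)
        (hΨ _ _ hPc hf _ fun x hx => (hP x hx).le)
    _ = ε := add_halves ε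

end SupNormLipschitzOn

theorem supNormLipschitzOn_inner_cfc_re {E : Type*} [NormedAddCommGroup E]
    [InnerProductSpace ℂ E] [CompleteSpace E] (T : E →L[ℂ] E) [IsStarNormal T] {R : ℝ}
    (hR : ‖T‖ ≤ R) {x : E} (hx : ‖x‖ = 1) :
    SupNormLipschitzOn (Icc (-R) R) fun g => inner ℂ x (cfc (fun z : ℂ => g z.re) T x) := by
  intro g h hg hh ε hgh
  have : Nontrivial E := nontrivial_of_ne x 0 (by rintro rfl; simp at hx)
  have hre : ∀ z ∈ spectrum ℂ T, z.re ∈ Icc (-R) R := fun z hz =>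
    abs_le.mp <| (Complex.abs_re_le_norm z).trans <| (spectrum.norm_le_norm_of_mem hz).trans hR
  have hR₀ : 0 ≤ R := (norm_nonneg T).trans hR
  have hε : 0 ≤ ε := (norm_nonneg _).trans <| hgh 0 ⟨by linarith, hR₀⟩
  rw [← inner_sub_right, ← sub_apply,
    ← cfc_sub (fun z : ℂ => g z.re) (fun z : ℂ => h z.re) T
    (hg.comp Complex.continuous_re).continuousOn (hh.comp Complex.continuous_re).continuousOn]
  calc _ ≤ ‖x‖ * (‖cfc (fun z : ℂ => g z.re - h z.re) T‖ * ‖x‖) :=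
        (norm_inner_le_norm _ _).trans (by gcongr; exact ContinuousLinearMap.le_opNorm _ _)
    _ = ‖cfc (fun z : ℂ => g z.re - h z.re) T‖ := by rw [hx, one_mul, mul_one]
    _ ≤ ε := norm_cfc_le hε fun z hz => hgh _ (hre z hz)

theorem supNormLipschitzOn_average_comp {s : Set ℝ} {u : ℝ → ℝ} (hu : Continuous u)
    (hus : ∀ ω, u ω ∈ s) :
    SupNormLipschitzOn s fun g => (1 / (2 * π) : ℂ) * ∫ ω in (-π)..π, g (u ω) := by
  intro g h hg hh ε hgh
  have hgu : Continuous fun ω => g (u ω) := hg.comp hu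
  have hhu : Continuous fun ω => h (u ω) := hh.comp hu
  rw [← mul_sub, ← intervalIntegral.integral_sub (hgu.intervalIntegrable _ _)
    (hhu.intervalIntegrable _ _), norm_mul]
  have hnorm : ‖(1 / (2 * π) : ℂ)‖ = (2 * π)⁻¹ := by
    rw [one_div, norm_inv, norm_mul, Complex.norm_two, Complex.norm_real,
      Real.norm_of_nonneg pi_pos.le]
  calc _ ≤ (2 * π)⁻¹ * (ε * |π - -π|) := by
        rw [hnorm]
        gcongr
        exact intervalIntegral.norm_integral_le_of_norm_le_const fun ω _ => hgh _ (hus ω)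
    _ = ε := by
      rw [sub_neg_eq_add, ← two_mul, abs_of_pos (by positivity)]
      field_simp

theorem IsSelfAdjoint.cfc_eval_re {A : Type*} [CStarAlgebra A] {a : A} (ha : IsSelfAdjoint a)
    (P : ℂ[X]) : cfc (fun z : ℂ => P.eval (z.re : ℂ)) a = aeval a P := by
  have : IsStarNormal a := ha.isStarNormal
  rw [← cfc_polynomial P a]
  exact cfc_congr fun z hz => by rw [← ha.mem_spectrum_eq_re hz]

local notation "ℓ²" => lp (fun _ : ℤ => ℂ) 2

section Jacobi

variable {c₁ c₂ : ℝ} {A : ℓ² →L[ℂ] ℓ²}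

theorem pow_apply_single_zero_eq_integral
    (hA : ∀ (f : ℓ²) (v : ℤ), A f v = (c₁ : ℂ) * f v + (c₂ : ℂ) * (f (v - 1) + f (v + 1)))
    (n : ℕ) (v : ℤ) :
    (A ^ n) (lp.single 2 0 1) v = (1 / (2 * π) : ℂ) * ∫ ω in (-π)..π,
      ((c₁ + 2 * c₂ * Real.cos ω : ℝ) : ℂ) ^ n * Complex.exp (Complex.I * v * ω) := by
  induction n generalizing v with
  | zero =>
    rw [pow_zero, one_apply_eq_self, lp.single_apply]
    simp only [pow_zero, one_mul, integral_exp_I_mul_int_mul, Pi.single_apply]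
    split_ifs
    · field_simp
    · rw [mul_zero]
  | succ n ih =>
    have hint : ∀ w : ℤ, IntervalIntegrable (fun ω : ℝ =>
        ((c₁ + 2 * c₂ * Real.cos ω : ℝ) : ℂ) ^ n * Complex.exp (Complex.I * w * ω))
        MeasureTheory.volume (-π) π :=
      fun w => by apply Continuous.intervalIntegrable; fun_prop
    have hstep : ∀ ω : ℝ,
        ((c₁ + 2 * c₂ * Real.cos ω : ℝ) : ℂ) ^ (n + 1) * Complex.exp (Complex.I * v * ω)
          = c₁ * (((c₁ + 2 * c₂ * Real.cos ω : ℝ) : ℂ) ^ n * Complex.exp (Complex.I * v * ω))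
          + c₂ * (((c₁ + 2 * c₂ * Real.cos ω : ℝ) : ℂ) ^ n
              * Complex.exp (Complex.I * (v - 1 : ℤ) * ω)
            + ((c₁ + 2 * c₂ * Real.cos ω : ℝ) : ℂ) ^ n
              * Complex.exp (Complex.I * (v + 1 : ℤ) * ω)) := by
      intro ω
      rw [← mul_add, ← two_cos_mul_exp_I_mul_int_mul]
      push_cast
      ring
    rw [pow_succ', mul_apply_eq_comp, hA, ih, ih, ih,
      intervalIntegral.integral_congr fun ω _ => hstep ω,
      intervalIntegral.integral_add ((hint v).const_mul _) (((hint _).add (hint _)).const_mul _),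
      intervalIntegral.integral_const_mul, intervalIntegral.integral_const_mul,
      intervalIntegral.integral_add (hint _) (hint _)]
    ring

theorem inner_single_zero_aeval_single_zero
    (hA : ∀ (f : ℓ²) (v : ℤ), A f v = (c₁ : ℂ) * f v + (c₂ : ℂ) * (f (v - 1) + f (v + 1)))
    (P : ℂ[X]) :
    inner ℂ (lp.single 2 0 1 : ℓ²) (aeval A P (lp.single 2 0 1)) =
      (1 / (2 * π) : ℂ) * ∫ ω in (-π)..π, P.eval ((c₁ + 2 * c₂ * Real.cos ω : ℝ) : ℂ) := by
  induction P using Polynomial.induction_on' with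
  | add p q hp hq =>
    have hint : ∀ r : ℂ[X], IntervalIntegrable (fun ω : ℝ =>
        r.eval ((c₁ + 2 * c₂ * Real.cos ω : ℝ) : ℂ)) MeasureTheory.volume (-π) π :=
      fun r => by apply Continuous.intervalIntegrable; fun_prop
    simp only [map_add, add_apply, inner_add_right, hp, hq, eval_add,
      intervalIntegral.integral_add (hint p) (hint q), mul_add]
  | monomial n a =>
    simp only [aeval_monomial, eval_monomial, ← Algebra.smul_def, smul_apply,
      inner_smul_right, lp.inner_single_left, pow_apply_single_zero_eq_integral hA,
      intervalIntegral.integral_const_mul, Int.cast_zero, mul_zero, zero_mul, Complex.exp_zero,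
      mul_one, RCLike.inner_apply, map_one]
    ring

end Jacobi

theorem spectral_measure_at_root_eq_pushforward_cos_general
    (c₁ c₂ : ℝ)
    (A : lp (fun _ : ℤ => ℂ) 2 →L[ℂ] lp (fun _ : ℤ => ℂ) 2)
    (hA : ∀ (f : lp (fun _ : ℤ => ℂ) 2) (v : ℤ),
      A f v = (c₁ : ℂ) * f v + (c₂ : ℂ) * (f (v - 1) + f (v + 1)))
    (hsa : IsSelfAdjoint A)
    (δ₀ : lp (fun _ : ℤ => ℂ) 2) (hδ₀ : ∀ v : ℤ, δ₀ v = if v = 0 then 1 else 0)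
    (f : ℝ → ℂ) (hf : Continuous f) :
    (inner ℂ δ₀ (cfc (fun z : ℂ => f z.re) A δ₀) : ℂ)
      = (1 / (2 * π) : ℂ) * ∫ ω in (-π)..π, f (c₁ + 2 * c₂ * Real.cos ω) := by
  obtain rfl : δ₀ = lp.single 2 0 1 := lp.ext <| funext fun v => by simp [hδ₀, Pi.single_apply]
  have : IsStarNormal A := hsa.isStarNormal
  set R := max ‖A‖ (|c₁| + 2 * |c₂|)
  have hsymbol : ∀ ω, c₁ + 2 * c₂ * Real.cos ω ∈ Icc (-R) R := fun ω => abs_le.mp <|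
    calc |c₁ + 2 * c₂ * Real.cos ω| ≤ |c₁| + 2 * |c₂| * |Real.cos ω| := by
          simpa [abs_mul, mul_assoc] using abs_add_le c₁ (2 * c₂ * Real.cos ω)
      _ ≤ |c₁| + 2 * |c₂| * 1 := by gcongr; exact abs_cos_le_one ω
      _ = |c₁| + 2 * |c₂| := by rw [mul_one]
      _ ≤ R := le_max_right _ _
  refine SupNormLipschitzOn.eq_of_eq_on_polynomials
    (Φ := fun g => inner ℂ (lp.single 2 0 1) (cfc (fun z : ℂ => g z.re) A (lp.single 2 0 1)))
    (Ψ := fun g => (1 / (2 * π) : ℂ) * ∫ ω in (-π)..π, g (c₁ + 2 * c₂ * Real.cos ω))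
    (supNormLipschitzOn_inner_cfc_re A (le_max_left _ _) (by simp [lp.norm_single]))
    (supNormLipschitzOn_average_comp (by fun_prop) hsymbol) (fun P => ?_) hf
  rw [hsa.cfc_eval_re, inner_single_zero_aeval_single_zero hA]

/-- For the self-adjoint Jacobi operator `(Af)(v) = c₁f(v) + c₂(f(v-1) + f(v+1))` on
`ℓ²(ℤ; ℂ)` and the indicator `δ₀` of the vertex `0`, the spectral measure at the root `0`
is given by `⟨δ₀, f(A)δ₀⟩ = (1/2π)∫_{-π}^{π} f(c₁ + 2c₂cos ω) dω` for every continuous `f`,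
where `f(A)` is the continuous functional calculus applied to `A` (the spectrum of the
self-adjoint `A` is real, so only the values of `f` on `ℝ` matter). -/
theorem spectral_measure_at_root_eq_pushforward_cos
    (c₁ c₂ : ℝ) (hc₂ : 0 < c₂)
    (A : lp (fun _ : ℤ => ℂ) 2 →L[ℂ] lp (fun _ : ℤ => ℂ) 2)
    (hA : ∀ (f : lp (fun _ : ℤ => ℂ) 2) (v : ℤ),
      A f v = (c₁ : ℂ) * f v + (c₂ : ℂ) * (f (v - 1) + f (v + 1)))
    (hsa : IsSelfAdjoint A)
    (δ₀ : lp (fun _ : ℤ => ℂ) 2) (hδ₀ : ∀ v : ℤ, δ₀ v = if v = 0 then 1 else 0)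
    (f : ℝ → ℂ) (hf : Continuous f) :
    (inner ℂ δ₀ (cfc (fun z : ℂ => f z.re) A δ₀) : ℂ)
      = (1 / (2 * π) : ℂ) * ∫ ω in (-π)..π, f (c₁ + 2 * c₂ * Real.cos ω) :=
  spectral_measure_at_root_eq_pushforward_cos_general c₁ c₂ A hA hsa δ₀ hδ₀ f hf
end

section
/- Let β > 0 and γ ≥ 1, and set L₋ = β(1 - √γ)² and L₊ = β(1 + √γ)². Then ∫_{L₋}^{L₊} √((x - L₋)(L₊ - x))/(2πβx) dx = 1, i.e. the Marchenko–Pastur density is a probability density on ℝ. -/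
/-!
With `a = β(1 - √γ)²` and `b = β(1 + √γ)²` the integral is `(2πβ)⁻¹ ∫ₐᵇ √((x - a)(b - x)) / x dx`.
For `0 ≤ a < b` the integrand has the elementary antiderivative
`√((x - a)(b - x)) + (a + b)/2 · arcsin((2x - a - b)/(b - a))
  - √(ab) · arcsin(((a + b)x - 2ab)/((b - a)x))`,
whose two arcsines run from `-π/2` to `π/2` on `[a, b]`; hence the integral equals
`π((a + b)/2 - √(ab))`, and `(a + b)/2 = β(1 + γ)`, `√(ab) = β(γ - 1)` give `2πβ`.
Integrability near `a = 0`, where the integrand is unbounded, comes for free because it is a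
nonnegative derivative.
-/

open Real Set MeasureTheory intervalIntegral

theorem HasDerivAt.arcsin_of_one_sub_sq_eq {u : ℝ → ℝ} {u' s x : ℝ} (hu : HasDerivAt u u' x)
    (hs : 0 < s) (hsq : 1 - u x ^ 2 = s ^ 2) :
    HasDerivAt (fun y => arcsin (u y)) (u' / s) x := by
  have h₁ : -1 < u x := by nlinarith
  have h₂ : u x < 1 := by nlinarith
  have h := (hasDerivAt_arcsin h₁.ne' h₂.ne).comp x hu
  rw [hsq, sqrt_sq hs.le] at h
  exact h.congr_deriv (by ring)

section Antiderivative

variable {a b x : ℝ}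

theorem hasDerivAt_sqrt_mul_sub (hx : x ∈ Ioo a b) :
    HasDerivAt (fun y => √((y - a) * (b - y)))
      ((a + b - 2 * x) / (2 * √((x - a) * (b - x)))) x := by
  have hq : HasDerivAt (fun y => (y - a) * (b - y)) (a + b - 2 * x) x :=
    (((hasDerivAt_id' x).sub_const a).mul ((hasDerivAt_id' x).const_sub b)).congr_deriv (by ring)
  exact hq.sqrt (mul_pos (sub_pos.2 hx.1) (sub_pos.2 hx.2)).ne'

theorem hasDerivAt_arcsin_affine (hx : x ∈ Ioo a b) :
    HasDerivAt (fun y => arcsin ((2 * y - a - b) / (b - a))) (1 / √((x - a) * (b - x))) x := by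
  have hba : 0 < b - a := by linarith [hx.1, hx.2]
  have hp : 0 < (x - a) * (b - x) := mul_pos (sub_pos.2 hx.1) (sub_pos.2 hx.2)
  have hu : HasDerivAt (fun y => (2 * y - a - b) / (b - a)) (2 / (b - a)) x := by
    simpa using ((((hasDerivAt_id x).const_mul 2).sub_const a).sub_const b).div_const (b - a)
  refine (hu.arcsin_of_one_sub_sq_eq (s := 2 * √((x - a) * (b - x)) / (b - a))
    (by positivity) ?_).congr_deriv (by field_simp)
  rw [div_pow, div_pow, mul_pow, sq_sqrt hp.le]
  field_simp
  ring

theorem hasDerivAt_arcsin_moebius (ha : 0 < a) (hx : x ∈ Ioo a b) :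
    HasDerivAt (fun y => arcsin (((a + b) * y - 2 * (a * b)) / ((b - a) * y)))
      (√(a * b) / (x * √((x - a) * (b - x)))) x := by
  have hba : 0 < b - a := by linarith [hx.1, hx.2]
  have hx0 : 0 < x := ha.trans hx.1
  have hp : 0 < (x - a) * (b - x) := mul_pos (sub_pos.2 hx.1) (sub_pos.2 hx.2)
  have hab : 0 < a * b := mul_pos ha (by linarith [hx.1, hx.2])
  have hu : HasDerivAt (fun y => ((a + b) * y - 2 * (a * b)) / ((b - a) * y))
      (2 * (a * b) / ((b - a) * x ^ 2)) x := by
    refine ((((hasDerivAt_id x).const_mul (a + b)).sub_const (2 * (a * b))).div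
      ((hasDerivAt_id x).const_mul (b - a)) (by positivity)).congr_deriv ?_
    simp only [id_eq]
    field_simp
    ring
  refine (hu.arcsin_of_one_sub_sq_eq (s := 2 * √(a * b) * √((x - a) * (b - x)) / ((b - a) * x))
    (by positivity) ?_).congr_deriv ?_
  · simp only [div_pow, mul_pow, sq_sqrt hp.le, sq_sqrt hab.le]
    field_simp
    ring
  · have : √(a * b) ^ 2 = a * b := sq_sqrt hab.le
    field_simp
    rw [this]

noncomputable def marchenkoPasturAntideriv (a b x : ℝ) : ℝ :=
  √((x - a) * (b - x)) + (a + b) / 2 * arcsin ((2 * x - a - b) / (b - a))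
    - √(a * b) * arcsin (((a + b) * x - 2 * (a * b)) / ((b - a) * x))

theorem hasDerivAt_marchenkoPasturAntideriv (ha : 0 ≤ a) (hx : x ∈ Ioo a b) :
    HasDerivAt (marchenkoPasturAntideriv a b) (√((x - a) * (b - x)) / x) x := by
  have hx0 : 0 < x := ha.trans_lt hx.1
  have hs : 0 < √((x - a) * (b - x)) := sqrt_pos.2 (mul_pos (sub_pos.2 hx.1) (sub_pos.2 hx.2))
  have hmoebius : HasDerivAt
      (fun y => √(a * b) * arcsin (((a + b) * y - 2 * (a * b)) / ((b - a) * y)))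
      (a * b / (x * √((x - a) * (b - x)))) x := by
    rcases ha.eq_or_lt with rfl | ha
    · simpa using hasDerivAt_const x (0 : ℝ)
    · refine ((hasDerivAt_arcsin_moebius ha hx).const_mul (√(a * b))).congr_deriv ?_
      rw [← mul_div_assoc, mul_self_sqrt (mul_pos ha (ha.trans (hx.1.trans hx.2))).le]
  refine (((hasDerivAt_sqrt_mul_sub hx).add
    ((hasDerivAt_arcsin_affine hx).const_mul ((a + b) / 2))).sub hmoebius).congr_deriv ?_
  field_simp
  rw [sq_sqrt (mul_pos (sub_pos.2 hx.1) (sub_pos.2 hx.2)).le]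
  ring

theorem continuousOn_marchenkoPasturAntideriv (ha : 0 ≤ a) (hab : a < b) :
    ContinuousOn (marchenkoPasturAntideriv a b) (Icc a b) := by
  unfold marchenkoPasturAntideriv
  refine ContinuousOn.sub (by fun_prop) ?_
  rcases ha.eq_or_lt with rfl | ha
  · simpa using continuousOn_const
  · refine continuousOn_const.mul (continuous_arcsin.comp_continuousOn
      (ContinuousOn.div (by fun_prop) (by fun_prop) fun x hx => ?_))
    have : 0 < x := ha.trans_le hx.1
    have : 0 < b - a := sub_pos.2 hab
    positivity

theorem marchenkoPasturAntideriv_right (ha : 0 ≤ a) (hab : a < b) :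
    marchenkoPasturAntideriv a b b = π / 2 * ((a + b) / 2 - √(a * b)) := by
  have hba : b - a ≠ 0 := (sub_pos.2 hab).ne'
  have hb : b ≠ 0 := (ha.trans_lt hab).ne'
  have h₁ : (2 * b - a - b) / (b - a) = 1 := by rw [div_eq_one_iff_eq hba]; ring
  have h₂ : ((a + b) * b - 2 * (a * b)) / ((b - a) * b) = 1 := by
    rw [div_eq_one_iff_eq (mul_ne_zero hba hb)]; ring
  simp only [marchenkoPasturAntideriv, h₁, h₂, arcsin_one, sub_self, mul_zero, sqrt_zero]
  ring

theorem marchenkoPasturAntideriv_left (ha : 0 ≤ a) (hab : a < b) :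
    marchenkoPasturAntideriv a b a = -(π / 2 * ((a + b) / 2 - √(a * b))) := by
  have hba : b - a ≠ 0 := (sub_pos.2 hab).ne'
  have h₁ : (2 * a - a - b) / (b - a) = -1 := by rw [div_eq_iff hba]; ring
  have h₂ : √(a * b) * arcsin (((a + b) * a - 2 * (a * b)) / ((b - a) * a))
      = √(a * b) * (-(π / 2)) := by
    rcases ha.eq_or_lt with rfl | ha
    · simp
    · rw [show ((a + b) * a - 2 * (a * b)) / ((b - a) * a) = -1 by
        rw [div_eq_iff (mul_ne_zero hba ha.ne')]; ring, arcsin_neg_one]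
  simp only [marchenkoPasturAntideriv, h₁, h₂, arcsin_neg_one, sub_self, zero_mul, sqrt_zero]
  ring

theorem integral_sqrt_mul_sub_div_self (ha : 0 ≤ a) (hab : a < b) :
    ∫ x in a..b, √((x - a) * (b - x)) / x = π * ((a + b) / 2 - √(a * b)) := by
  have hderiv := fun x (hx : x ∈ Ioo a b) => hasDerivAt_marchenkoPasturAntideriv ha hx
  have hcont := continuousOn_marchenkoPasturAntideriv ha hab
  have hint : IntervalIntegrable (fun x => √((x - a) * (b - x)) / x) volume a b :=
    (intervalIntegrable_iff_integrableOn_Ioc_of_le hab.le).2 <| integrableOn_deriv_of_nonneg hcont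
      hderiv fun x hx => div_nonneg (sqrt_nonneg _) (ha.trans hx.1.le)
  rw [integral_eq_sub_of_hasDerivAt_of_le hab.le hcont hderiv hint,
    marchenkoPasturAntideriv_right ha hab, marchenkoPasturAntideriv_left ha hab]
  ring

end Antiderivative

/-- The Marchenko–Pastur density with parameters `β > 0`, `γ ≥ 1` integrates to `1`,
where `L₋ = β(1-√γ)²` and `L₊ = β(1+√γ)²`. -/
theorem marchenko_pastur_density_integrates_to_one (β γ : ℝ) (hβ : 0 < β) (hγ : 1 ≤ γ) :
    ∫ x in (β * (1 - Real.sqrt γ) ^ 2)..(β * (1 + Real.sqrt γ) ^ 2),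
        Real.sqrt ((x - β * (1 - Real.sqrt γ) ^ 2) * (β * (1 + Real.sqrt γ) ^ 2 - x))
          / (2 * π * β * x) = 1 := by
  have hγ' : √γ ^ 2 = γ := sq_sqrt (zero_le_one.trans hγ)
  have hab : β * (1 - √γ) ^ 2 < β * (1 + √γ) ^ 2 := by
    have : 1 ≤ √γ := one_le_sqrt.2 hγ
    nlinarith
  have hsum : (β * (1 - √γ) ^ 2 + β * (1 + √γ) ^ 2) / 2 = β * (1 + γ) := by
    linear_combination β * hγ'
  have hprod : √(β * (1 - √γ) ^ 2 * (β * (1 + √γ) ^ 2)) = β * (γ - 1) := by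
    rw [show β * (1 - √γ) ^ 2 * (β * (1 + √γ) ^ 2) = (β * (γ - 1)) ^ 2 by
      linear_combination β ^ 2 * (√γ ^ 2 + γ - 2) * hγ']
    exact sqrt_sq (mul_nonneg hβ.le (sub_nonneg.2 hγ))
  simp only [div_mul_eq_div_div_swap (b := 2 * π * β)]
  rw [intervalIntegral.integral_div, integral_sqrt_mul_sub_div_self (by positivity) hab,
    hsum, hprod]
  field_simp
  ring
end
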